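/- arXiv:2108.02806 — 2 statements merged into one kernel-verified Lean document; each statement's English description precedes it below -/
import Mathlib

section
/- Let H be a finite group, K a subgroup, k a field of characteristic zero, and π a finite-dimensional H-representation. The image of the natural evaluation (counit) map Fun(H/K) ⊗_{Fun(K\H/K)} π^K → π equals the H-subrepresentation of π generated by the K-invariant vectors π^K. -/
/-- The space of `H`-equivariant linear maps from the permutation representation
`Fun(H/K)` (functions on the coset space, with `H` acting by left translation) to a
representation `ρ` of `H` on `V`. -/
def permEquivHoms (k : Type*) [Field k] (H : Type*) [Group H] (K : Subgroup H)
    (V : Type*) [AddCommGroup V] [Module k V] (ρ : Representation k H V) :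
    Submodule k (((H ⧸ K) → k) →ₗ[k] V) where
  carrier := {f | ∀ (g : H) (x : (H ⧸ K) → k),
    f (fun c => x (g⁻¹ • c)) = ρ g (f x)}
  add_mem' := by
    intro f₁ f₂ h₁ h₂ g x
    simp [h₁ g x, h₂ g x]
  zero_mem' := by intro g x; simp
  smul_mem' := by
    intro c f hf g x
    simp [hf g x]

/-- The subspace of `K`-invariant vectors of a representation. -/
def repInvariants (k : Type*) [Field k] (H : Type*) [Group H] (K : Subgroup H)
    (V : Type*) [AddCommGroup V] [Module k V] (ρ : Representation k H V) :
    Submodule k V where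
  carrier := {v | ∀ g ∈ K, ρ g v = v}
  add_mem' := by intro a b ha hb g hg; simp [ha g hg, hb g hg]
  zero_mem' := by intro g hg; simp
  smul_mem' := by intro c v hv g hg; simp [hv g hg]

/-- For a finite group `H`, subgroup `K`, field `k` of characteristic zero, and a
finite-dimensional `H`-representation `π`, the image of the evaluation (counit) map
`Fun(H/K) ⊗_{Fun(K\H/K)} π^K → π`, i.e. the span of all vectors `φ(f)` for `φ` an
`H`-equivariant map `Fun(H/K) → π` and `f ∈ Fun(H/K)`, equals the `H`-subrepresentation
of `π` generated by the `K`-invariant vectors `π^K`. -/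
theorem counit_image_eq_subrep_generated_by_invariants
    (k : Type*) [Field k] [CharZero k] (H : Type*) [Group H] [Fintype H] (K : Subgroup H)
    (V : Type*) [AddCommGroup V] [Module k V] [FiniteDimensional k V]
    (ρ : Representation k H V) :
    Submodule.span k {v : V | ∃ f : ((H ⧸ K) → k) →ₗ[k] V,
        f ∈ permEquivHoms k H K V ρ ∧ ∃ x : (H ⧸ K) → k, f x = v}
      = sInf {W : Submodule k V |
          repInvariants k H K V ρ ≤ W ∧ ∀ (g : H), ∀ v ∈ W, ρ g v ∈ W} := by
  classical
  apply le_antisymm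
  · rw [Submodule.span_le]
    rintro v ⟨f, hf, x, rfl⟩
    rw [SetLike.mem_coe, Submodule.mem_sInf]
    rintro W ⟨hWinv, hWstab⟩
    set δ : (H ⧸ K) → k := fun j => if QuotientGroup.mk 1 = j then 1 else 0 with hδ
    have key : ∀ g : H, f (fun j => if QuotientGroup.mk g = j then 1 else 0) = ρ g (f δ) := by
      intro g
      rw [← hf g δ]
      congr 1
      funext c
      simp only [hδ]
      congr 1
      rw [eq_iff_iff]
      constructor
      · rintro rfl
        show (QuotientGroup.mk 1 : H ⧸ K) = QuotientGroup.mk (g⁻¹ * g)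
        rw [inv_mul_cancel]
      · intro h
        rw [← smul_inv_smul g c, ← h]
        show (QuotientGroup.mk g : H ⧸ K) = QuotientGroup.mk (g * 1)
        rw [mul_one]
    have hinv : f δ ∈ repInvariants k H K V ρ := by
      intro g hg
      rw [← key g]
      congr 1
      funext j
      congr 1
      rw [eq_iff_iff]
      constructor
      · rintro rfl; exact (QuotientGroup.eq).2 (by simpa using K.inv_mem hg)
      · rintro rfl; exact (QuotientGroup.eq).2 (by simpa using hg)
    rw [show f x = ∑ c : H ⧸ K,
        f (x c • ((fun j => if c = j then (1:k) else 0) : (H ⧸ K) → k)) by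
      rw [← map_sum]; congr 1; exact pi_eq_sum_univ x]
    apply Submodule.sum_mem
    intro c _
    rw [map_smul]
    apply Submodule.smul_mem
    obtain ⟨g, rfl⟩ := QuotientGroup.mk_surjective c
    rw [key g]
    exact hWstab g _ (hWinv hinv)
  · apply sInf_le
    constructor
    · -- invariants are in the span
      intro v hv
      set F : ((H ⧸ K) → k) →ₗ[k] V :=
        ∑ g : H, (LinearMap.proj (QuotientGroup.mk g : H ⧸ K)).smulRight (ρ g v) with hF
      have hFapp : ∀ x : (H ⧸ K) → k, F x = ∑ g : H, x (QuotientGroup.mk g) • ρ g v := by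
        intro x
        simp [hF, LinearMap.sum_apply]
      have hFequiv : F ∈ permEquivHoms k H K V ρ := by
        intro g x
        rw [hFapp, hFapp, map_sum]
        refine Fintype.sum_equiv (Equiv.mulLeft g⁻¹) _ _ ?_
        intro h
        have h1 : (g⁻¹ • (QuotientGroup.mk h : H ⧸ K)) = QuotientGroup.mk (g⁻¹ * h) := rfl
        have h2 : ρ g (ρ (g⁻¹ * h) v) = ρ h v := by
          rw [← Module.End.mul_apply, ← map_mul, mul_inv_cancel_left]
        simp only [Equiv.coe_mulLeft, h1, map_smul, h2]
      set δ : (H ⧸ K) → k := fun j => if QuotientGroup.mk 1 = j then 1 else 0 with hδ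
      have hcard : F δ = (Fintype.card K : k) • v := by
        rw [hFapp]
        have key : ∀ g : H, δ (QuotientGroup.mk g) • ρ g v
            = if g ∈ K then v else 0 := by
          intro g
          simp only [hδ]
          by_cases hg : g ∈ K
          · have : (QuotientGroup.mk 1 : H ⧸ K) = QuotientGroup.mk g :=
              (QuotientGroup.eq).2 (by simpa using hg)
            simp [this, hg, hv g hg]
          · have : ¬ ((QuotientGroup.mk 1 : H ⧸ K) = QuotientGroup.mk g) := by
              intro h
              exact hg (by simpa using (QuotientGroup.eq).1 h)
            simp [this, hg]
        rw [Finset.sum_congr rfl (fun g _ => key g), Finset.sum_ite, Finset.sum_const_zero,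
          add_zero, Finset.sum_const, Nat.cast_smul_eq_nsmul, Fintype.card_subtype]
      have hne : (Fintype.card K : k) ≠ 0 :=
        Nat.cast_ne_zero.2 Fintype.card_ne_zero
      have hv' : v = (Fintype.card K : k)⁻¹ • F δ := by
        rw [hcard, smul_smul, inv_mul_cancel₀ hne, one_smul]
      rw [hv']
      exact Submodule.smul_mem _ _ (Submodule.subset_span ⟨F, hFequiv, δ, rfl⟩)
    · -- span is H-stable
      intro g v hv
      induction hv using Submodule.span_induction with
      | mem w hw =>
          obtain ⟨f, hf, x, rfl⟩ := hw
          exact Submodule.subset_span ⟨f, hf, fun c => x (g⁻¹ • c), (hf g x)⟩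
      | zero => simp
      | add a b _ _ ha hb => rw [map_add]; exact Submodule.add_mem _ ha hb
      | smul c a _ ha => rw [map_smul]; exact Submodule.smul_mem _ c ha
end

section
/- Let g = sl₂(k) over an algebraically closed field k of characteristic zero, with standard basis e, h, f. For λ ∈ k, let M(λ) be the Verma module of highest weight λ. The Verma module M(λ) is simple if and only if λ + 1 is not a positive integer, i.e. if and only if ⟨α∨, λ + ρ⟩ ∉ ℤ_{>0} where ⟨α∨, λ⟩ = λ and ρ corresponds to 1. -/
/-- The action of `f` on the Verma module for `sl₂` with basis `v_n` (`n : ℕ`):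
`f · v_n = v_{n+1}`. -/
noncomputable def vermaF (k : Type*) [Field k] : (ℕ →₀ k) →ₗ[k] (ℕ →₀ k) :=
  Finsupp.lsum k fun n => Finsupp.lsingle (n + 1)

/-- The action of `h` on the Verma module of highest weight `lam` for `sl₂`:
`h · v_n = (λ − 2n) v_n`. -/
noncomputable def vermaH (k : Type*) [Field k] (lam : k) : (ℕ →₀ k) →ₗ[k] (ℕ →₀ k) :=
  Finsupp.lsum k fun n => (lam - 2 * (n : k)) • Finsupp.lsingle n

/-- The action of `e` on the Verma module of highest weight `lam` for `sl₂`: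
`e · v_n = n(λ − n + 1) v_{n−1}` (and `e · v_0 = 0`). -/
noncomputable def vermaE (k : Type*) [Field k] (lam : k) : (ℕ →₀ k) →ₗ[k] (ℕ →₀ k) :=
  Finsupp.lsum k fun n => ((n : k) * (lam - (n : k) + 1)) • Finsupp.lsingle (n - 1)

lemma vermaF_single (k : Type*) [Field k] (n : ℕ) (a : k) :
    vermaF k (Finsupp.single n a) = Finsupp.single (n+1) a := by
  simp [vermaF]

lemma vermaH_single (k : Type*) [Field k] (lam : k) (n : ℕ) (a : k) :
    vermaH k lam (Finsupp.single n a) = (lam - 2*(n:k)) • Finsupp.single n a := by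
  simp [vermaH, Finsupp.smul_single]

lemma vermaE_single (k : Type*) [Field k] (lam : k) (n : ℕ) (a : k) :
    vermaE k lam (Finsupp.single n a)
      = ((n:k)*(lam-(n:k)+1)) • Finsupp.single (n-1) a := by
  simp [vermaE, Finsupp.smul_single]

lemma vermaE_apply (k : Type*) [Field k] (lam : k) (v : ℕ →₀ k) (N : ℕ) :
    vermaE k lam v N = (((N:k)+1) * (lam - N)) * v (N+1) := by
  rw [vermaE, Finsupp.lsum_apply, Finsupp.sum_apply, Finsupp.sum]
  rw [Finset.sum_eq_single (N+1)]
  · simp only [LinearMap.smul_apply, Finsupp.lsingle_apply, Finsupp.smul_single,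
      Finsupp.single_apply, Nat.add_sub_cancel, if_pos rfl, smul_eq_mul]
    push_cast
    ring
  · intro b _ hbne
    simp only [LinearMap.smul_apply, Finsupp.lsingle_apply, Finsupp.smul_single,
      Finsupp.single_apply]
    rcases Nat.eq_zero_or_pos b with rfl | hb
    · simp
    · rw [if_neg (by omega)]
  · intro h
    rw [Finsupp.notMem_support_iff.mp h]
    simp

/-- For `g = sl₂(k)` over an algebraically closed field of characteristic zero, the Verma
module `M(λ)` is simple (every `g`-submodule, i.e. subspace invariant under `e`, `h` and `f`,
is `⊥` or `⊤`) if and only if `λ + 1` is not a positive integer, i.e. `λ ∉ {0, 1, 2, ...}`. -/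
theorem sl2_verma_simple_iff (k : Type*) [Field k] [IsAlgClosed k] [CharZero k] (lam : k) :
    (∀ p : Submodule k (ℕ →₀ k),
        (∀ v ∈ p, vermaE k lam v ∈ p ∧ vermaH k lam v ∈ p ∧ vermaF k v ∈ p) →
        p = ⊥ ∨ p = ⊤) ↔ ¬ ∃ n : ℕ, lam = (n : k) := by
  constructor
  · intro hsimple hex
    obtain ⟨n, rfl⟩ := hex
    set S : Set (ℕ →₀ k) := {w | ∃ m, n < m ∧ w = Finsupp.single m (1:k)} with hS
    set p : Submodule k (ℕ →₀ k) := Submodule.span k S with hp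
    have hgen : ∀ m, n < m → Finsupp.single m (1:k) ∈ p :=
      fun m hm => Submodule.subset_span ⟨m, hm, rfl⟩
    have hinv : ∀ v ∈ p, vermaE k (n:k) v ∈ p ∧ vermaH k (n:k) v ∈ p ∧ vermaF k v ∈ p := by
      intro v hv
      refine ⟨?_, ?_, ?_⟩
      · have hle : p ≤ Submodule.comap (vermaE k (n:k)) p := by
          rw [hp]
          refine Submodule.span_le.mpr ?_
          rintro w ⟨m, hm, rfl⟩
          simp only [SetLike.mem_coe, Submodule.mem_comap, vermaE_single]
          rcases eq_or_lt_of_le (Nat.succ_le_of_lt hm) with h | h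
          · have hm1 : m = n + 1 := h.symm
            subst hm1
            have hz : ((n:k) - ((n+1 : ℕ):k) + 1) = 0 := by push_cast; ring
            rw [hz, mul_zero, zero_smul]
            exact p.zero_mem
          · exact p.smul_mem _ (hgen (m-1) (by omega))
        exact hle hv
      · have hle : p ≤ Submodule.comap (vermaH k (n:k)) p := by
          rw [hp]
          refine Submodule.span_le.mpr ?_
          rintro w ⟨m, hm, rfl⟩
          simp only [SetLike.mem_coe, Submodule.mem_comap, vermaH_single]
          exact p.smul_mem _ (hgen m hm)
        exact hle hv
      · have hle : p ≤ Submodule.comap (vermaF k) p := by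
          rw [hp]
          refine Submodule.span_le.mpr ?_
          rintro w ⟨m, hm, rfl⟩
          simp only [SetLike.mem_coe, Submodule.mem_comap, vermaF_single]
          exact hgen (m+1) (by omega)
        exact hle hv
    rcases hsimple p hinv with h | h
    · have : Finsupp.single (n+1) (1:k) ∈ p := hgen (n+1) (by omega)
      rw [h, Submodule.mem_bot] at this
      exact one_ne_zero (Finsupp.single_eq_zero.mp this)
    · have hker : p ≤ LinearMap.ker (Finsupp.lapply (M := k) 0) := by
        refine Submodule.span_le.mpr ?_
        rintro w ⟨m, hm, rfl⟩
        simp only [SetLike.mem_coe, LinearMap.mem_ker, Finsupp.lapply_apply,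
          Finsupp.single_apply]
        rw [if_neg (by omega)]
      have : Finsupp.single 0 (1:k) ∈ p := by rw [h]; trivial
      have := hker this
      simp [Finsupp.lapply] at this
  · intro hnot p hp
    rcases eq_or_ne p ⊥ with h | h
    · exact Or.inl h
    right
    obtain ⟨v, hv, hvne⟩ := Submodule.ne_bot_iff p |>.mp h
    -- Step 1: single 0 1 ∈ p
    have key : ∀ N : ℕ, ∀ w : ℕ →₀ k, w ∈ p → (w.support ⊆ Finset.range (N+1)) →
        w ≠ 0 → Finsupp.single 0 (1:k) ∈ p := by
      intro N
      induction N with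
      | zero =>
        intro w hw hsupp hwne
        obtain ⟨c, hc⟩ : ∃ c, w = Finsupp.single 0 c := by
          refine ⟨w 0, Finsupp.support_subset_singleton.mp ?_⟩
          simpa using hsupp
        subst hc
        have hne : c ≠ 0 := by
          intro hz
          exact hwne (by rw [hz, Finsupp.single_zero])
        have heq : Finsupp.single 0 (1:k) = c⁻¹ • Finsupp.single 0 c := by
          rw [Finsupp.smul_single, smul_eq_mul, inv_mul_cancel₀ hne]
        rw [heq]
        exact p.smul_mem _ hw
      | succ N ih =>
        intro w hw hsupp hwne
        by_cases hN : w (N+1) = 0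
        · refine ih w hw ?_ hwne
          intro m hm
          have h1 := hsupp hm
          simp only [Finset.mem_range] at h1 ⊢
          rcases Nat.lt_succ_iff_lt_or_eq.mp h1 with h2 | h2
          · exact h2
          · subst h2
            exact absurd hN (Finsupp.mem_support_iff.mp hm)
        · set u := vermaE k lam w with hu
          have hup : u ∈ p := (hp w hw).1
          have huN : u N = (((N:k)+1) * (lam - N)) * w (N+1) := vermaE_apply k lam w N
          have hne1 : ((N:k)+1) ≠ 0 := by
            have : ((N+1 : ℕ) : k) ≠ 0 := Nat.cast_ne_zero.mpr (by omega)
            push_cast at this; exact this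
          have hne2 : (lam - (N:k)) ≠ 0 := sub_ne_zero.mpr (fun hh => hnot ⟨N, hh⟩)
          have huNne : u N ≠ 0 := by
            rw [huN]
            exact mul_ne_zero (mul_ne_zero hne1 hne2) hN
          refine ih u hup ?_ ?_
          · intro m hm
            have hum : u m ≠ 0 := Finsupp.mem_support_iff.mp hm
            rw [vermaE_apply] at hum
            have : w (m+1) ≠ 0 := by
              intro hz; rw [hz, mul_zero] at hum; exact hum rfl
            have : m+1 ∈ w.support := Finsupp.mem_support_iff.mpr this
            have := hsupp this
            simp only [Finset.mem_range] at this ⊢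
            omega
          · intro hz
            rw [hz] at huNne
            exact huNne rfl
    have hrange : v.support ⊆ Finset.range (v.support.sup id + 1) := by
      intro m hm
      simp only [Finset.mem_range]
      exact Nat.lt_succ_of_le (Finset.le_sup (f := id) hm)
    have h0 : Finsupp.single 0 (1:k) ∈ p := key _ v hv hrange hvne
    -- Step 2: all singles ∈ p
    have hsingle : ∀ m : ℕ, Finsupp.single m (1:k) ∈ p := by
      intro m
      induction m with
      | zero => exact h0
      | succ m ih =>
        have := (hp _ ih).2.2
        rwa [vermaF_single] at this
    -- Step 3: p = ⊤
    rw [eq_top_iff]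
    intro w _
    induction w using Finsupp.induction with
    | zero => exact p.zero_mem
    | single_add a b f _ _ ihf =>
      refine p.add_mem ?_ (ihf trivial)
      have : Finsupp.single a b = b • Finsupp.single a (1:k) := by
        rw [Finsupp.smul_single, smul_eq_mul, mul_one]
      rw [this]
      exact p.smul_mem _ (hsingle a)
end
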